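/- arXiv:2006.09484 — 2 statements merged into one kernel-verified Lean document; each statement's English description precedes it below -/
import Mathlib

section
/- (Approximate policy improvement step.) Let ε ≥ 0, let v ∈ ℝ^S, let π be a policy with ‖L_π v − v‖∞ ≤ (1−γ) ε, and let π' be a policy greedy for v, i.e. L_{π'} v = L v. Then the robust value functions satisfy v_{π'} ≥ v_π − (2γε/(1−γ)) · 1 componentwise, where 1 is the all-ones vector and v_π, v_{π'} are the unique fixed points of L_π, L_{π'}. -/
/-!
Both `L_π` and `L_π'` are monotone and shift constants by a factor `γ`:
`L_π (w + c) = L_π w + γ c`, because `P_s` consists of probability kernels and `π_s` is a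
distribution. For such an operator `T` with fixed point `u`, comparing `u` with `v ± ε` at the
state of largest gap shows that `T v ≤ v + (1 - γ) ε` forces `u ≤ v + ε`, and applying `T` once
more gives `u ≤ T v + γ ε`; dually `v ≤ T v + (1 - γ) ε` gives `T v ≤ u + γ ε`. With
`L_π v ≤ L v = L_π' v` this yields `v_π ≤ L_π v + γ ε ≤ L_π' v + γ ε ≤ v_π' + 2 γ ε`,
and `2 γ ε ≤ 2 γ ε / (1 - γ)`.
-/

open Function Finset

section ShiftOperators

variable {S : Type*} [Finite S] {T : (S → ℝ) → S → ℝ} {γ : ℝ}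

theorem le_of_le_apply_of_isFixedPt (hγ : γ < 1) (hT : Monotone T)
    (hshift : ∀ w c, T (w + const S c) = T w + const S (γ * c))
    {u w : S → ℝ} (hu : IsFixedPt T u) (hw : w ≤ T w) : w ≤ u := by
  intro s
  have : Nonempty S := ⟨s⟩
  obtain ⟨s₀, hs₀⟩ := Finite.exists_max fun t => w t - u t
  have hle : w ≤ u + const S (w s₀ - u s₀) := fun t => by
    simp only [Pi.add_apply, const_apply]; linarith [hs₀ t]
  -- at the state of largest gap the gap is at most `γ` times itself, hence nonpositive
  have hgap : w s₀ ≤ u s₀ + γ * (w s₀ - u s₀) := by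
    simpa [hshift, hu.eq] using (hw.trans (hT hle)) s₀
  have : w s₀ - u s₀ ≤ 0 := by nlinarith
  linarith [hs₀ s]

theorem le_of_apply_le_of_isFixedPt (hγ : γ < 1) (hT : Monotone T)
    (hshift : ∀ w c, T (w + const S c) = T w + const S (γ * c))
    {u w : S → ℝ} (hu : IsFixedPt T u) (hw : T w ≤ w) : u ≤ w := by
  intro s
  have : Nonempty S := ⟨s⟩
  obtain ⟨s₀, hs₀⟩ := Finite.exists_max fun t => u t - w t
  have hle : u ≤ w + const S (u s₀ - w s₀) := fun t => by
    simp only [Pi.add_apply, const_apply]; linarith [hs₀ t]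
  have hgap : u s₀ ≤ T w s₀ + γ * (u s₀ - w s₀) := by
    simpa [hshift, hu.eq] using (hT hle) s₀
  have : u s₀ - w s₀ ≤ 0 := by nlinarith [hw s₀]
  linarith [hs₀ s]

theorem le_apply_add_of_isFixedPt (hγ : γ < 1) (hT : Monotone T)
    (hshift : ∀ w c, T (w + const S c) = T w + const S (γ * c))
    {u v : S → ℝ} {ε : ℝ} (hu : IsFixedPt T u) (hv : T v ≤ v + const S ((1 - γ) * ε)) :
    u ≤ T v + const S (γ * ε) := by
  have hsuper : T (v + const S ε) ≤ v + const S ε := fun s => by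
    have := hv s
    simp only [hshift, Pi.add_apply, const_apply] at this ⊢
    linarith
  calc u = T u := hu.eq.symm
    _ ≤ T (v + const S ε) := hT (le_of_apply_le_of_isFixedPt hγ hT hshift hu hsuper)
    _ = T v + const S (γ * ε) := hshift v ε

theorem apply_le_add_of_isFixedPt (hγ : γ < 1) (hT : Monotone T)
    (hshift : ∀ w c, T (w + const S c) = T w + const S (γ * c))
    {u v : S → ℝ} {ε : ℝ} (hu : IsFixedPt T u) (hv : v ≤ T v + const S ((1 - γ) * ε)) :
    T v ≤ u + const S (γ * ε) := by
  have hsub : v + const S (-ε) ≤ T (v + const S (-ε)) := fun s => by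
    have := hv s
    simp only [hshift, Pi.add_apply, const_apply] at this ⊢
    linarith
  have hle := hT (le_of_le_apply_of_isFixedPt hγ hT hshift hu hsub)
  rw [hshift, hu.eq] at hle
  intro s
  have := hle s
  simp only [Pi.add_apply, const_apply] at this ⊢
  linarith

end ShiftOperators

theorem le_add_const_of_norm_sub_le {S : Type*} [Fintype S] {x y : S → ℝ} {δ : ℝ}
    (h : ‖x - y‖ ≤ δ) : x ≤ y + const S δ := fun s => by
  have := (le_abs_self _).trans ((Real.norm_eq_abs _ ▸ norm_le_pi_norm (x - y) s).trans h)
  simp only [Pi.sub_apply, Pi.add_apply, const_apply] at *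
  linarith

theorem sum_mul_add_const_of_mem_stdSimplex {ι : Type*} [Fintype ι] {w : ι → ℝ}
    (hw : w ∈ stdSimplex ℝ ι) (x : ι → ℝ) (c : ℝ) :
    ∑ i, w i * (x i + c) = ∑ i, w i * x i + c := by
  simp only [mul_add, sum_add_distrib, ← sum_mul, hw.2, one_mul]

section RobustBellman

variable {S A : Type*} [Fintype S] [Fintype A] (γ : ℝ) (r : S → A → S → ℝ)

def robustObjective (s : S) (d : A → ℝ) (v : S → ℝ) (p : A → S → ℝ) : ℝ :=
  ∑ a, d a * ∑ s', p a s' * (r s a s' + γ * v s')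

variable {γ r}

theorem robustObjective_mono (hγ : 0 ≤ γ) {s : S} {d : A → ℝ} (hd : ∀ a, 0 ≤ d a)
    {p : A → S → ℝ} (hp : ∀ a s', 0 ≤ p a s') :
    Monotone fun v => robustObjective γ r s d v p := fun u w huw =>
  sum_le_sum fun a _ => mul_le_mul_of_nonneg_left (sum_le_sum fun s' _ =>
    mul_le_mul_of_nonneg_left (by gcongr; exact huw s') (hp a s')) (hd a)

theorem robustObjective_add_const {s : S} {d : A → ℝ} (hd : d ∈ stdSimplex ℝ A)
    {p : A → S → ℝ} (hp : ∀ a, p a ∈ stdSimplex ℝ S) (v : S → ℝ) (c : ℝ) :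
    robustObjective γ r s d (v + const S c) p = robustObjective γ r s d v p + γ * c := by
  have hrow (a : A) : ∑ s', p a s' * (r s a s' + γ * (v s' + c)) =
      ∑ s', p a s' * (r s a s' + γ * v s') + γ * c := by
    simp_rw [mul_add γ, ← add_assoc]
    exact sum_mul_add_const_of_mem_stdSimplex (hp a) _ _
  simp only [robustObjective, Pi.add_apply, const_apply, hrow,
    sum_mul_add_const_of_mem_stdSimplex hd]

theorem continuous_robustObjective (s : S) (d : A → ℝ) (v : S → ℝ) :
    Continuous (robustObjective γ r s d v) := by
  unfold robustObjective; fun_prop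

theorem continuous_robustObjective_policy (s : S) (v : S → ℝ) (p : A → S → ℝ) :
    Continuous fun d => robustObjective γ r s d v p := by
  unfold robustObjective; fun_prop

variable (γ r) (P : S → Set (A → S → ℝ))

noncomputable def robustBellman (π : S → A → ℝ) (v : S → ℝ) (s : S) : ℝ :=
  sInf (robustObjective γ r s (π s) v '' P s)

noncomputable def robustOptimal (v : S → ℝ) (s : S) : ℝ :=
  sSup ((fun d => sInf (robustObjective γ r s d v '' P s)) '' stdSimplex ℝ A)

variable {γ r P}

theorem bddBelow_robustObjective_image {s : S} (hP : IsCompact (P s)) (d : A → ℝ)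
    (v : S → ℝ) : BddBelow (robustObjective γ r s d v '' P s) :=
  hP.bddBelow_image (continuous_robustObjective s d v).continuousOn

theorem robustBellman_monotone (hγ : 0 ≤ γ) (hPne : ∀ s, (P s).Nonempty)
    (hPc : ∀ s, IsCompact (P s)) (hPsub : ∀ s, ∀ p ∈ P s, ∀ a, p a ∈ stdSimplex ℝ S)
    {π : S → A → ℝ} (hπ : ∀ s, π s ∈ stdSimplex ℝ A) : Monotone (robustBellman γ r P π) :=
  fun u w huw s => le_csInf ((hPne s).image _) <| by
    rintro _ ⟨p, hp, rfl⟩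
    exact (csInf_le (bddBelow_robustObjective_image (hPc s) _ u) ⟨p, hp, rfl⟩).trans
      (robustObjective_mono hγ (hπ s).1 (fun a => (hPsub s p hp a).1) huw)

theorem robustBellman_add_const (hPne : ∀ s, (P s).Nonempty)
    (hPc : ∀ s, IsCompact (P s)) (hPsub : ∀ s, ∀ p ∈ P s, ∀ a, p a ∈ stdSimplex ℝ S)
    {π : S → A → ℝ} (hπ : ∀ s, π s ∈ stdSimplex ℝ A) (v : S → ℝ) (c : ℝ) :
    robustBellman γ r P π (v + const S c) = robustBellman γ r P π v + const S (γ * c) := by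
  funext s
  have himage : robustObjective γ r s (π s) (v + const S c) '' P s =
      (· + γ * c) '' (robustObjective γ r s (π s) v '' P s) := by
    rw [Set.image_image]
    exact Set.image_congr fun p hp => robustObjective_add_const (hπ s) (hPsub s p hp) v c
  rw [robustBellman, himage]
  exact ((OrderIso.addRight (γ * c)).map_csInf' ((hPne s).image _)
    (bddBelow_robustObjective_image (hPc s) _ v)).symm

theorem robustBellman_le_robustOptimal (hPne : ∀ s, (P s).Nonempty)
    (hPc : ∀ s, IsCompact (P s)) {π : S → A → ℝ} (hπ : ∀ s, π s ∈ stdSimplex ℝ A)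
    (v : S → ℝ) : robustBellman γ r P π v ≤ robustOptimal γ r P v := fun s => by
  obtain ⟨p₀, hp₀⟩ := hPne s
  obtain ⟨M, hM⟩ := (isCompact_stdSimplex ℝ A).bddAbove_image
    (continuous_robustObjective_policy s v p₀).continuousOn
  refine le_csSup ⟨M, ?_⟩ ⟨π s, hπ s, rfl⟩
  rintro _ ⟨d, hd, rfl⟩
  exact (csInf_le (bddBelow_robustObjective_image (hPc s) d v) ⟨p₀, hp₀, rfl⟩).trans
    (hM ⟨d, hd, rfl⟩)

end RobustBellman

theorem approximate_policy_improvement_general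
    {S A : Type*} [Fintype S] [Fintype A]
    (γ : ℝ) (hγ0 : 0 < γ) (hγ1 : γ < 1)
    (r : S → A → S → ℝ)
    (P : S → Set (A → S → ℝ))
    (hPne : ∀ s, (P s).Nonempty)
    (hPcompact : ∀ s, IsCompact (P s))
    (hPsub : ∀ s, ∀ p ∈ P s, ∀ a, p a ∈ stdSimplex ℝ S)
    (Lpol : (S → A → ℝ) → (S → ℝ) → (S → ℝ))
    (hLpol : ∀ (π : S → A → ℝ) (v : S → ℝ) (s : S), Lpol π v s =
      sInf ((fun p : A → S → ℝ =>
        ∑ a, π s a * ∑ s', p a s' * (r s a s' + γ * v s')) '' P s))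
    (L : (S → ℝ) → (S → ℝ))
    (hL : ∀ v s, L v s =
      sSup ((fun d : A → ℝ =>
        sInf ((fun p : A → S → ℝ =>
          ∑ a, d a * ∑ s', p a s' * (r s a s' + γ * v s')) '' P s)) '' stdSimplex ℝ A))
    (ε : ℝ) (hε : 0 ≤ ε)
    (v : S → ℝ)
    (π π' : S → A → ℝ)
    (hπ : ∀ s, π s ∈ stdSimplex ℝ A) (hπ' : ∀ s, π' s ∈ stdSimplex ℝ A)
    (heval : ‖Lpol π v - v‖ ≤ (1 - γ) * ε)
    (hgreedy : Lpol π' v = L v)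
    (vpi vpi' : S → ℝ)
    (hvpi : Lpol π (vpi) = vpi) (hvpi' : Lpol π' (vpi') = vpi') :
    (fun s => vpi s - 2 * γ * ε / (1 - γ)) ≤ vpi' := by
  have hLpol' : Lpol = robustBellman γ r P := funext fun π => funext fun v => funext (hLpol π v)
  have hL' : L = robustOptimal γ r P := funext fun v => funext (hL v)
  subst hLpol' hL'
  have hvpi_le : vpi ≤ robustBellman γ r P π v + const S (γ * ε) :=
    le_apply_add_of_isFixedPt hγ1
      (robustBellman_monotone hγ0.le hPne hPcompact hPsub hπ)
      (robustBellman_add_const hPne hPcompact hPsub hπ) hvpi (le_add_const_of_norm_sub_le heval)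
  have himprove : robustBellman γ r P π v ≤ robustBellman γ r P π' v :=
    hgreedy ▸ robustBellman_le_robustOptimal hPne hPcompact hπ v
  have hv_le : v ≤ robustBellman γ r P π v + const S ((1 - γ) * ε) :=
    le_add_const_of_norm_sub_le (by rwa [norm_sub_rev])
  have hvpi'_ge : robustBellman γ r P π' v ≤ vpi' + const S (γ * ε) :=
    apply_le_add_of_isFixedPt hγ1
      (robustBellman_monotone hγ0.le hPne hPcompact hPsub hπ')
      (robustBellman_add_const hPne hPcompact hPsub hπ') hvpi'
      (hv_le.trans (by gcongr))
  have hslack : 2 * γ * ε ≤ 2 * γ * ε / (1 - γ) :=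
    le_div_self (by positivity) (by linarith) (by linarith)
  intro s
  have h₁ := hvpi_le s
  have h₂ := hvpi'_ge s
  have h₃ := himprove s
  simp only [Pi.add_apply, const_apply] at h₁ h₂
  linarith

/-- Approximate policy improvement step. If `‖Lpi v − v‖∞ ≤ (1−γ)ε`
and π' is greedy for `v`, then `vpi' ≥ vpi − (2γε/(1−γ))·1` componentwise. -/
theorem approximate_policy_improvement
    {S A : Type*} [Fintype S] [Nonempty S] [Fintype A] [Nonempty A]
    (γ : ℝ) (hγ0 : 0 < γ) (hγ1 : γ < 1)
    (r : S → A → S → ℝ)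
    (P : S → Set (A → S → ℝ))
    (hPne : ∀ s, (P s).Nonempty)
    (hPcompact : ∀ s, IsCompact (P s))
    (hPsub : ∀ s, ∀ p ∈ P s, ∀ a, p a ∈ stdSimplex ℝ S)
    (Lpol : (S → A → ℝ) → (S → ℝ) → (S → ℝ))
    (hLpol : ∀ (π : S → A → ℝ) (v : S → ℝ) (s : S), Lpol π v s =
      sInf ((fun p : A → S → ℝ =>
        ∑ a, π s a * ∑ s', p a s' * (r s a s' + γ * v s')) '' P s))
    (L : (S → ℝ) → (S → ℝ))
    (hL : ∀ v s, L v s =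
      sSup ((fun d : A → ℝ =>
        sInf ((fun p : A → S → ℝ =>
          ∑ a, d a * ∑ s', p a s' * (r s a s' + γ * v s')) '' P s)) '' stdSimplex ℝ A))
    (ε : ℝ) (hε : 0 ≤ ε)
    (v : S → ℝ)
    (π π' : S → A → ℝ)
    (hπ : ∀ s, π s ∈ stdSimplex ℝ A) (hπ' : ∀ s, π' s ∈ stdSimplex ℝ A)
    (heval : ‖Lpol π v - v‖ ≤ (1 - γ) * ε)
    (hgreedy : Lpol π' v = L v)
    (vpi vpi' : S → ℝ)
    (hvpi : Lpol π (vpi) = vpi) (hvpi' : Lpol π' (vpi') = vpi') :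
    (fun s => vpi s - 2 * γ * ε / (1 - γ)) ≤ vpi' :=
  approximate_policy_improvement_general γ hγ0 hγ1 r P hPne hPcompact hPsub Lpol hLpol L hL ε hε v π
    π' hπ hπ' heval hgreedy vpi vpi' hvpi hvpi'
end

section
/- (Minimax exchange.) Let Ξ = { ξ ∈ ℝ^A : ξ ≥ 0, Σ_{a ∈ A} ξ_a ≤ κ }. Then max_{d ∈ Δ^A} min_{ξ ∈ Ξ} Σ_{a ∈ A} d_a · q_a(ξ_a) = min_{ξ ∈ Ξ} max_{a ∈ A} q_a(ξ_a). -/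
/-!
Each `q a` is the value function `ξ ↦ inf {f p | p ∈ K, g p ≤ ξ}` of a convex program (linear
objective, convex budget constraint), hence convex and bounded below on `[0, ∞)`. The theorem is
then the minimax equality for finitely many convex functions `g a` on a convex set `Ξ` against
mixed strategies `d ∈ Δ^A`. If `v` is the min-max value, no `ξ ∈ Ξ` has `g a ξ < v` for all `a`,
so the open orthant `{y | y < v}` misses the upward closure of `{(g a ξ)_a | ξ ∈ Ξ}`, a convex set.
The normal of a separating hyperplane is nonnegative, and after normalization it is the
maximizing `d`.
-/

open Finset

section ValueFunction

variable {E : Type*} {K : Set E} {f g : E → ℝ} {D : Set ℝ}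

theorem convexOn_sInf_image_sublevel [AddCommGroup E] [Module ℝ E] (hK : Convex ℝ K)
    (hf : ConvexOn ℝ K f) (hg : ConvexOn ℝ K g) (hfK : BddBelow (f '' K)) (hD : Convex ℝ D)
    (hfeas : ∀ ξ ∈ D, ∃ p ∈ K, g p ≤ ξ) :
    ConvexOn ℝ D fun ξ => sInf (f '' {p | p ∈ K ∧ g p ≤ ξ}) := by
  set V : ℝ → ℝ := fun ξ => sInf (f '' {p | p ∈ K ∧ g p ≤ ξ})
  have hne : ∀ ξ ∈ D, (f '' {p | p ∈ K ∧ g p ≤ ξ}).Nonempty := fun ξ hξ =>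
    let ⟨p, hpK, hp⟩ := hfeas ξ hξ
    ⟨f p, p, ⟨hpK, hp⟩, rfl⟩
  refine ⟨hD, fun ξ₁ hξ₁ ξ₂ hξ₂ a b ha hb hab => le_of_forall_pos_le_add fun ε hε => ?_⟩
  obtain ⟨_, ⟨p₁, ⟨hp₁K, hp₁⟩, rfl⟩, hfp₁⟩ := Real.lt_sInf_add_pos (hne ξ₁ hξ₁) hε
  obtain ⟨_, ⟨p₂, ⟨hp₂K, hp₂⟩, rfl⟩, hfp₂⟩ := Real.lt_sInf_add_pos (hne ξ₂ hξ₂) hε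
  have hmem : a • p₁ + b • p₂ ∈ {p | p ∈ K ∧ g p ≤ a • ξ₁ + b • ξ₂} :=
    ⟨hK hp₁K hp₂K ha hb hab, (hg.2 hp₁K hp₂K ha hb hab).trans (by simp only [smul_eq_mul]; gcongr)⟩
  calc V (a • ξ₁ + b • ξ₂)
      ≤ f (a • p₁ + b • p₂) := csInf_le (hfK.mono (Set.image_mono fun p hp => hp.1)) ⟨_, hmem, rfl⟩
    _ ≤ a * f p₁ + b * f p₂ := hf.2 hp₁K hp₂K ha hb hab
    _ ≤ a * (V ξ₁ + ε) + b * (V ξ₂ + ε) := by gcongr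
    _ = a • V ξ₁ + b • V ξ₂ + ε := by simp only [smul_eq_mul]; linear_combination ε * hab

theorem bddBelow_sInf_image_sublevel (hfK : BddBelow (f '' K)) (hfeas : ∀ ξ ∈ D, ∃ p ∈ K, g p ≤ ξ) :
    BddBelow ((fun ξ => sInf (f '' {p | p ∈ K ∧ g p ≤ ξ})) '' D) := by
  obtain ⟨m, hm⟩ := hfK
  refine ⟨m, ?_⟩
  rintro _ ⟨ξ, hξ, rfl⟩
  obtain ⟨p, hpK, hp⟩ := hfeas ξ hξ
  exact le_csInf ⟨f p, p, ⟨hpK, hp⟩, rfl⟩ fun _ ⟨p, hp, h⟩ => h ▸ hm ⟨p, hp.1, rfl⟩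

end ValueFunction

theorem convexOn_sum_mul_abs_sub {S : Type*} [Fintype S] {w c : S → ℝ} (hw : ∀ i, 0 ≤ w i) :
    ConvexOn ℝ Set.univ fun p : S → ℝ => ∑ i, w i * |p i - c i| := by
  refine ⟨convex_univ, fun x _ y _ a b ha hb hab => ?_⟩
  simp only [smul_eq_mul, mul_sum, ← sum_add_distrib, Pi.add_apply, Pi.smul_apply]
  refine sum_le_sum fun i _ => ?_
  have hsplit : a * x i + b * y i - c i = a * (x i - c i) + b * (y i - c i) := by
    linear_combination c i * hab
  have habs : |a * (x i - c i) + b * (y i - c i)| ≤ a * |x i - c i| + b * |y i - c i| :=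
    calc |a * (x i - c i) + b * (y i - c i)| ≤ |a * (x i - c i)| + |b * (y i - c i)| :=
          abs_add_le _ _
      _ = a * |x i - c i| + b * |y i - c i| := by
          rw [abs_mul, abs_mul, abs_of_nonneg ha, abs_of_nonneg hb]
  calc w i * |a * x i + b * y i - c i| ≤ w i * (a * |x i - c i| + b * |y i - c i|) := by
        rw [hsplit]; exact mul_le_mul_of_nonneg_left habs (hw i)
    _ = a * (w i * |x i - c i|) + b * (w i * |y i - c i|) := by ring

theorem nonneg_of_forall_le_add_mul {a b u : ℝ} (h : ∀ t, 0 ≤ t → u ≤ a + t * b) : 0 ≤ b := by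
  by_contra! hb
  have := h ((a - u + 1) / -b) (div_nonneg (by linarith [h 0 le_rfl]) (by linarith))
  rw [div_mul_eq_mul_div, div_neg, mul_div_assoc, div_self hb.ne, mul_one] at this
  linarith

section Minimax

variable {ι E : Type*} [AddCommGroup E] [Module ℝ E] {Ξ : Set E} {g : ι → E → ℝ}

theorem convex_setOf_exists_forall_le (hΞ : Convex ℝ Ξ) (hg : ∀ i, ConvexOn ℝ Ξ (g i)) :
    Convex ℝ {y : ι → ℝ | ∃ x ∈ Ξ, ∀ i, g i x ≤ y i} := by
  rintro y₁ ⟨x₁, hx₁, hy₁⟩ y₂ ⟨x₂, hx₂, hy₂⟩ a b ha hb hab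
  refine ⟨a • x₁ + b • x₂, hΞ hx₁ hx₂ ha hb hab, fun i => ?_⟩
  calc g i (a • x₁ + b • x₂) ≤ a • g i x₁ + b • g i x₂ := (hg i).2 hx₁ hx₂ ha hb hab
    _ ≤ (a • y₁ + b • y₂) i := by simp only [Pi.add_apply, Pi.smul_apply]; gcongr <;> simp [*]

variable [Fintype ι]

theorem sum_mul_le_ciSup_of_mem_stdSimplex {d : ι → ℝ} (hd : d ∈ stdSimplex ℝ ι) (x : ι → ℝ) :
    ∑ i, d i * x i ≤ ⨆ i, x i :=
  calc ∑ i, d i * x i ≤ ∑ i, d i * ⨆ j, x j := sum_le_sum fun i _ =>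
        mul_le_mul_of_nonneg_left (le_ciSup (Set.finite_range x).bddAbove i) (hd.1 i)
    _ = ⨆ j, x j := by rw [← sum_mul, hd.2, one_mul]

theorem exists_nonneg_forall_le_sum_mul (hΞ : Convex ℝ Ξ) (hne : Ξ.Nonempty)
    (hg : ∀ i, ConvexOn ℝ Ξ (g i)) {c : ℝ} (hc : ∀ x ∈ Ξ, ∃ i, c ≤ g i x) :
    ∃ d : ι → ℝ, (∀ i, 0 ≤ d i) ∧ 0 < ∑ i, d i ∧ ∀ x ∈ Ξ, (∑ i, d i) * c ≤ ∑ i, d i * g i x := by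
  classical
  set O : Set (ι → ℝ) := ⋂ i, {y | y i < c}
  set C : Set (ι → ℝ) := {y | ∃ x ∈ Ξ, ∀ i, g i x ≤ y i}
  have hdisj : Disjoint O C := by
    refine Set.disjoint_left.2 fun y hyO ⟨x, hx, hy⟩ => ?_
    obtain ⟨i, hi⟩ := hc x hx
    exact (Set.mem_iInter.1 hyO i).not_ge (hi.trans (hy i))
  obtain ⟨f, u, hfO, hfC⟩ := geometric_hahn_banach_open
    (convex_iInter fun i => convex_halfSpace_lt (LinearMap.proj i : (ι → ℝ) →ₗ[ℝ] ℝ).isLinear c)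
    (isOpen_iInter_of_finite fun i => isOpen_lt (continuous_apply i) continuous_const)
    (convex_setOf_exists_forall_le hΞ hg) hdisj
  set d : ι → ℝ := fun i => f fun j => if i = j then 1 else 0
  have hf (y : ι → ℝ) : f y = ∑ i, d i * y i := by
    have := f.toLinearMap.pi_apply_eq_sum_univ y
    simp only [ContinuousLinearMap.coe_coe, smul_eq_mul] at this
    exact this.trans (sum_congr rfl fun i _ => mul_comm _ _)
  obtain ⟨x₀, hx₀⟩ := hne
  -- `C` is closed under adding nonnegative vectors, so `f` is bounded below on rays `y + t • eᵢ`.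
  have hd (i : ι) : 0 ≤ d i := nonneg_of_forall_le_add_mul fun t ht => by
    have hmem : (fun j => g j x₀) + t • (fun j => if i = j then 1 else 0) ∈ C := by
      refine ⟨x₀, hx₀, fun j => ?_⟩
      have : 0 ≤ t * (if i = j then (1 : ℝ) else 0) := mul_nonneg ht (by split_ifs <;> norm_num)
      simp only [Pi.add_apply, Pi.smul_apply, smul_eq_mul]
      linarith
    simpa only [map_add, map_smul, smul_eq_mul] using hfC _ hmem
  have hconst : ∀ r < c, (∑ i, d i) * r < u := fun r hr => by
    simpa only [hf, ← sum_mul] using hfO (fun _ => r) (Set.mem_iInter.2 fun i => hr)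
  have hu : u ≤ ∑ i, d i * g i x₀ := hf _ ▸ hfC _ ⟨x₀, hx₀, fun i => le_rfl⟩
  have hT : 0 < ∑ i, d i := by
    refine (sum_nonneg fun i _ => hd i).lt_of_ne fun hT0 => ?_
    have hd0 : ∀ i, d i = 0 := fun i =>
      (sum_eq_zero_iff_of_nonneg fun i _ => hd i).1 hT0.symm i (mem_univ i)
    have hu' := hconst (c - 1) (by linarith)
    simp only [hd0, zero_mul, sum_const_zero] at hu hu'
    linarith
  have hcu : c ≤ u / ∑ i, d i := le_of_forall_lt fun r hr => (lt_div_iff₀' hT).2 (hconst r hr)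
  refine ⟨d, hd, hT, fun x hx => ?_⟩
  calc (∑ i, d i) * c ≤ u := (le_div_iff₀' hT).1 hcu
    _ ≤ ∑ i, d i * g i x := hf _ ▸ hfC _ ⟨x, hx, fun i => le_rfl⟩

theorem exists_mem_stdSimplex_forall_le_sum_mul (hΞ : Convex ℝ Ξ) (hne : Ξ.Nonempty)
    (hg : ∀ i, ConvexOn ℝ Ξ (g i)) {c : ℝ} (hc : ∀ x ∈ Ξ, ∃ i, c ≤ g i x) :
    ∃ d ∈ stdSimplex ℝ ι, ∀ x ∈ Ξ, c ≤ ∑ i, d i * g i x := by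
  obtain ⟨d, hd, hT, hdc⟩ := exists_nonneg_forall_le_sum_mul hΞ hne hg hc
  refine ⟨fun i => d i / ∑ j, d j,
    ⟨fun i => div_nonneg (hd i) hT.le, by rw [← sum_div, div_self hT.ne']⟩, fun x hx => ?_⟩
  calc c ≤ (∑ i, d i * g i x) / ∑ j, d j := (le_div_iff₀' hT).2 (hdc x hx)
    _ = ∑ i, d i / (∑ j, d j) * g i x := by rw [sum_div]; exact sum_congr rfl fun i _ => by ring

theorem sSup_sInf_sum_mul_eq_sInf_iSup [Nonempty ι] (hΞ : Convex ℝ Ξ) (hne : Ξ.Nonempty)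
    (hg : ∀ i, ConvexOn ℝ Ξ (g i)) (hbdd : ∀ i, BddBelow (g i '' Ξ)) :
    sSup ((fun d : ι → ℝ => sInf ((fun x => ∑ i, d i * g i x) '' Ξ)) '' stdSimplex ℝ ι) =
      sInf ((fun x => ⨆ i, g i x) '' Ξ) := by
  choose m hm using hbdd
  have hinner : ∀ d ∈ stdSimplex ℝ ι, BddBelow ((fun x => ∑ i, d i * g i x) '' Ξ) := by
    rintro d hd
    refine ⟨∑ i, d i * m i, ?_⟩
    rintro _ ⟨x, hx, rfl⟩
    exact sum_le_sum fun i _ => mul_le_mul_of_nonneg_left (hm i ⟨x, hx, rfl⟩) (hd.1 i)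
  have hmax : BddBelow ((fun x => ⨆ i, g i x) '' Ξ) := by
    obtain ⟨i⟩ := ‹Nonempty ι›
    refine ⟨m i, ?_⟩
    rintro _ ⟨x, hx, rfl⟩
    exact (hm i ⟨x, hx, rfl⟩).trans (le_ciSup (f := (g · x)) (Set.finite_range _).bddAbove i)
  have hweak : ∀ d ∈ stdSimplex ℝ ι,
      sInf ((fun x => ∑ i, d i * g i x) '' Ξ) ≤ sInf ((fun x => ⨆ i, g i x) '' Ξ) := by
    refine fun d hd => le_csInf (hne.image _) ?_
    rintro _ ⟨x, hx, rfl⟩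
    exact (csInf_le (hinner d hd) ⟨x, hx, rfl⟩).trans (sum_mul_le_ciSup_of_mem_stdSimplex hd _)
  obtain ⟨d, hd, hdv⟩ := exists_mem_stdSimplex_forall_le_sum_mul hΞ hne hg fun x hx => by
    obtain ⟨i, hi⟩ := exists_eq_ciSup_of_finite (f := (g · x))
    exact ⟨i, (csInf_le hmax ⟨x, hx, rfl⟩).trans_eq hi.symm⟩
  have hΔ : (stdSimplex ℝ ι).Nonempty := by
    classical exact ⟨_, single_mem_stdSimplex ℝ (Classical.arbitrary ι)⟩
  refine le_antisymm (csSup_le (hΔ.image _) ?_) ?_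
  · rintro _ ⟨d, hd, rfl⟩
    exact hweak d hd
  · calc sInf ((fun x => ⨆ i, g i x) '' Ξ) ≤ sInf ((fun x => ∑ i, d i * g i x) '' Ξ) :=
          le_csInf (hne.image _) fun _ ⟨x, hx, h⟩ => h ▸ hdv x hx
      _ ≤ _ := le_csSup ⟨_, Set.forall_mem_image.2 hweak⟩ ⟨d, hd, rfl⟩

end Minimax

theorem s_rectangular_minimax_exchange_general
    {S A : Type*} [Fintype S] [Fintype A] [Nonempty A]
    (z : A → S → ℝ) (pbar : A → S → ℝ) (hpbar : ∀ a, pbar a ∈ stdSimplex ℝ S)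
    (w : A → S → ℝ) (hw : ∀ a i, 0 < w a i)
    (κ : ℝ) (hκ : 0 ≤ κ)
    (q : A → ℝ → ℝ)
    (hq : ∀ (a : A) (ξ : ℝ), q a ξ =
      sInf ((fun p : S → ℝ => ∑ i, z a i * p i) ''
        {p | p ∈ stdSimplex ℝ S ∧ ∑ i, w a i * |p i - pbar a i| ≤ ξ}))
    (Ξ : Set (A → ℝ))
    (hΞ : Ξ = {ξ : A → ℝ | (∀ a, 0 ≤ ξ a) ∧ ∑ a, ξ a ≤ κ}) :
    sSup ((fun d : A → ℝ =>
        sInf ((fun ξ : A → ℝ => ∑ a, d a * q a (ξ a)) '' Ξ)) '' stdSimplex ℝ A)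
      = sInf ((fun ξ : A → ℝ => ⨆ a, q a (ξ a)) '' Ξ) := by
  subst hΞ
  have hfeas (a : A) : ∀ ξ ∈ Set.Ici 0, ∃ p ∈ stdSimplex ℝ S, ∑ i, w a i * |p i - pbar a i| ≤ ξ :=
    fun ξ hξ => ⟨pbar a, hpbar a, by simpa using hξ⟩
  have hdot (a : A) : BddBelow ((fun p : S → ℝ => ∑ i, z a i * p i) '' stdSimplex ℝ S) :=
    (isCompact_stdSimplex ℝ S).bddBelow_image (by fun_prop)
  have hq_convex (a : A) : ConvexOn ℝ (Set.Ici 0) (q a) := by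
    rw [funext (hq a)]
    exact convexOn_sInf_image_sublevel (convex_stdSimplex ℝ S)
      ((dotProductBilin ℝ ℝ (z a)).convexOn (convex_stdSimplex ℝ S))
      ((convexOn_sum_mul_abs_sub fun i => (hw a i).le).subset (Set.subset_univ _)
        (convex_stdSimplex ℝ S)) (hdot a) (convex_Ici 0) (hfeas a)
  have hq_bdd (a : A) : BddBelow (q a '' Set.Ici 0) := by
    rw [funext (hq a)]
    exact bddBelow_sInf_image_sublevel (hdot a) (hfeas a)
  have hΞ : Convex ℝ {ξ : A → ℝ | (∀ a, 0 ≤ ξ a) ∧ ∑ a, ξ a ≤ κ} := (convex_Ici 0).inter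
    (convex_halfSpace_le ⟨fun _ _ => sum_add_distrib, fun _ _ => (mul_sum _ _ _).symm⟩ κ)
  refine sSup_sInf_sum_mul_eq_sInf_iSup hΞ ⟨0, fun _ => le_rfl, by simpa using hκ⟩
    (fun a => ((hq_convex a).comp_linearMap (LinearMap.proj (R := ℝ) (φ := fun _ => ℝ) a)).subset
      (fun ξ hξ => hξ.1 a) hΞ)
    (fun a => (hq_bdd a).mono (Set.image_subset_iff.2 fun ξ hξ => Set.mem_image_of_mem _ (hξ.1 a)))

/-- Minimax exchange. With `Ξ = {ξ ≥ 0 : Σ_a ξ_a ≤ κ}`,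
`max_{d ∈ Δ^A} min_{ξ ∈ Ξ} Σ_a d_a q_a(ξ_a) = min_{ξ ∈ Ξ} max_a q_a(ξ_a)`. -/
theorem s_rectangular_minimax_exchange
    {S A : Type*} [Fintype S] [Nonempty S] [Fintype A] [Nonempty A]
    (z : A → S → ℝ) (pbar : A → S → ℝ) (hpbar : ∀ a, pbar a ∈ stdSimplex ℝ S)
    (w : A → S → ℝ) (hw : ∀ a i, 0 < w a i)
    (κ : ℝ) (hκ : 0 ≤ κ)
    (q : A → ℝ → ℝ)
    (hq : ∀ (a : A) (ξ : ℝ), q a ξ =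
      sInf ((fun p : S → ℝ => ∑ i, z a i * p i) ''
        {p | p ∈ stdSimplex ℝ S ∧ ∑ i, w a i * |p i - pbar a i| ≤ ξ}))
    (Ξ : Set (A → ℝ))
    (hΞ : Ξ = {ξ : A → ℝ | (∀ a, 0 ≤ ξ a) ∧ ∑ a, ξ a ≤ κ}) :
    sSup ((fun d : A → ℝ =>
        sInf ((fun ξ : A → ℝ => ∑ a, d a * q a (ξ a)) '' Ξ)) '' stdSimplex ℝ A)
      = sInf ((fun ξ : A → ℝ => ⨆ a, q a (ξ a)) '' Ξ) :=
  s_rectangular_minimax_exchange_general z pbar hpbar w hw κ hκ q hq Ξ hΞ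
end
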